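/- In the ring ℤ[ζ₂₇]/(1−ζ₂₇)³ (ζ₂₇ a primitive 27th root of unity, σ the involution ζ ↦ ζ⁻¹), the set of units u satisfying u·u^σ ≡ 1 (mod (1−ζ₂₇)³) has exactly 6 elements, and these are precisely the classes of ±ζ₂₇^k for k = 0, 1, 2. -/

import Mathlib

/-!
Writing `s = 1 - ζ`, the relation `Φ₂₇(ζ) = 1 + ζ⁹ + ζ¹⁸ = 0` reads `3 (1 - 9s + 63s²) ≡ 0 mod s³`,
and `1 - 9s + 63s²` is a unit since `s` is nilpotent; so `3 ∈ (1 - ζ)³` and the quotient is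
`𝔽₃[t]/(t³)` with `ζ ↦ 1 - t`. There `σ` becomes the substitution `t ↦ 1 - (1 - t)²⁶`, and the
27-element ring can be searched exhaustively for the solutions of `x σ(x) = 1`.
-/

open Polynomial

/-- The ring `ℤ[ζ₂₇] = ℤ[x]/Φ₂₇(x)`. -/
abbrev R18 : Type := AdjoinRoot (cyclotomic 27 ℤ)

/-- The root `ζ₂₇`. -/
noncomputable def z18 : R18 := AdjoinRoot.root (cyclotomic 27 ℤ)

/-- The ideal `((1 - ζ₂₇)³)`. -/
noncomputable def I18 : Ideal R18 := Ideal.span {(1 - z18) ^ 3}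

/-- The quotient ring `ℤ[ζ₂₇]/(1 - ζ₂₇)³`. -/
abbrev Q18 : Type := R18 ⧸ I18

lemma cyclotomic_27_eq (R : Type*) [CommRing R] : cyclotomic 27 R = 1 + X ^ 9 + X ^ 18 := by
  rw [show 27 = 3 ^ (2 + 1) by norm_num, cyclotomic_prime_pow_eq_geom_sum Nat.prime_three]
  simp only [Finset.sum_range_succ, Finset.sum_range_zero]
  ring

lemma one_sub_pow_of_pow_three_eq_zero {R : Type*} [CommRing R] {s : R} (hs : s ^ 3 = 0) (n : ℕ) :
    (1 - s) ^ n = 1 - n * s + n.choose 2 * s ^ 2 := by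
  induction n with
  | zero => simp
  | succ n ih =>
    rw [pow_succ, ih, Nat.choose_succ_succ, Nat.choose_one_right]
    push_cast
    linear_combination (-(n.choose 2 : R)) * hs

def unitsSubtypeEquivOfMulEqOne {M : Type*} [CommMonoid M] (f : M → M) :
    {u : Mˣ // (u : M) * f u = 1} ≃ {a : M // a * f a = 1} where
  toFun u := ⟨u.1, u.2⟩
  invFun a := ⟨⟨a.1, f a.1, a.2, by rw [mul_comm, a.2]⟩, a.2⟩
  left_inv _ := Subtype.ext (Units.ext rfl)
  right_inv _ := rfl

/-- `R[t]/(t³)`, the element `⟨a, b, c⟩` standing for `a + b t + c t²`. -/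
@[ext] structure Trunc3 (R : Type*) where
  a : R
  b : R
  c : R
deriving DecidableEq

namespace Trunc3

variable {R : Type*} [CommRing R]

instance : Zero (Trunc3 R) := ⟨⟨0, 0, 0⟩⟩
instance : One (Trunc3 R) := ⟨⟨1, 0, 0⟩⟩
instance : Add (Trunc3 R) := ⟨fun x y => ⟨x.a + y.a, x.b + y.b, x.c + y.c⟩⟩
instance : Neg (Trunc3 R) := ⟨fun x => ⟨-x.a, -x.b, -x.c⟩⟩
instance : Mul (Trunc3 R) :=
  ⟨fun x y => ⟨x.a * y.a, x.a * y.b + x.b * y.a, x.a * y.c + x.b * y.b + x.c * y.a⟩⟩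

@[simp] lemma zero_a : (0 : Trunc3 R).a = 0 := rfl
@[simp] lemma zero_b : (0 : Trunc3 R).b = 0 := rfl
@[simp] lemma zero_c : (0 : Trunc3 R).c = 0 := rfl
@[simp] lemma one_a : (1 : Trunc3 R).a = 1 := rfl
@[simp] lemma one_b : (1 : Trunc3 R).b = 0 := rfl
@[simp] lemma one_c : (1 : Trunc3 R).c = 0 := rfl
@[simp] lemma add_a (x y : Trunc3 R) : (x + y).a = x.a + y.a := rfl
@[simp] lemma add_b (x y : Trunc3 R) : (x + y).b = x.b + y.b := rfl
@[simp] lemma add_c (x y : Trunc3 R) : (x + y).c = x.c + y.c := rfl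
@[simp] lemma neg_a (x : Trunc3 R) : (-x).a = -x.a := rfl
@[simp] lemma neg_b (x : Trunc3 R) : (-x).b = -x.b := rfl
@[simp] lemma neg_c (x : Trunc3 R) : (-x).c = -x.c := rfl
@[simp] lemma mul_a (x y : Trunc3 R) : (x * y).a = x.a * y.a := rfl
@[simp] lemma mul_b (x y : Trunc3 R) : (x * y).b = x.a * y.b + x.b * y.a := rfl
@[simp] lemma mul_c (x y : Trunc3 R) : (x * y).c = x.a * y.c + x.b * y.b + x.c * y.a := rfl

instance : CommRing (Trunc3 R) where
  add_assoc x y z := by ext <;> simp only [add_a, add_b, add_c] <;> ring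
  zero_add x := by ext <;> simp
  add_zero x := by ext <;> simp
  add_comm x y := by ext <;> simp only [add_a, add_b, add_c] <;> ring
  neg_add_cancel x := by ext <;> simp
  left_distrib x y z := by ext <;> simp only [add_a, add_b, add_c, mul_a, mul_b, mul_c] <;> ring
  right_distrib x y z := by ext <;> simp only [add_a, add_b, add_c, mul_a, mul_b, mul_c] <;> ring
  zero_mul x := by ext <;> simp
  mul_zero x := by ext <;> simp
  mul_assoc x y z := by ext <;> simp only [mul_a, mul_b, mul_c] <;> ring
  one_mul x := by ext <;> simp
  mul_one x := by ext <;> simp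
  mul_comm x y := by ext <;> simp only [mul_a, mul_b, mul_c] <;> ring
  nsmul := nsmulRec
  zsmul := zsmulRec

instance [Nontrivial R] : Nontrivial (Trunc3 R) :=
  ⟨⟨0, 1, fun h => zero_ne_one (congrArg a h)⟩⟩

instance [Fintype R] : Fintype (Trunc3 R) :=
  Fintype.ofEquiv (R × R × R)
    ⟨fun p => ⟨p.1, p.2.1, p.2.2⟩, fun x => (x.a, x.b, x.c), fun _ => rfl, fun _ => rfl⟩

def C : R →+* Trunc3 R where
  toFun r := ⟨r, 0, 0⟩
  map_one' := rfl
  map_mul' x y := by ext <;> simp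
  map_zero' := rfl
  map_add' x y := by ext <;> simp

def t : Trunc3 R := ⟨0, 1, 0⟩

lemma t_pow_three : (t : Trunc3 R) ^ 3 = 0 := by
  ext <;> simp [pow_succ, t]

lemma eq_C_add_C_mul_t_add_C_mul_t_sq (x : Trunc3 R) : x = C x.a + C x.b * t + C x.c * t ^ 2 := by
  ext <;> simp [pow_succ, t, C]

variable {S : Type*} [CommRing S]

lemma ringHom_ext {f g : Trunc3 R →+* S} (hC : f.comp C = g.comp C) (ht : f t = g t) : f = g := by
  have hC' (r : R) : f (C r) = g (C r) := RingHom.congr_fun hC r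
  ext x
  rw [eq_C_add_C_mul_t_add_C_mul_t_sq x]
  simp only [map_add, map_mul, map_pow, hC', ht]

def lift (f : R →+* S) (s : S) (hs : s ^ 3 = 0) : Trunc3 R →+* S where
  toFun x := f x.a + f x.b * s + f x.c * s ^ 2
  map_one' := by simp
  map_zero' := by simp
  map_add' x y := by simp only [add_a, add_b, add_c, map_add]; ring
  map_mul' x y := by
    simp only [mul_a, mul_b, mul_c, map_add, map_mul]
    linear_combination (-(f x.b * f y.c + f x.c * f y.b + f x.c * f y.c * s)) * hs

@[simp] lemma lift_C (f : R →+* S) (s : S) (hs : s ^ 3 = 0) (r : R) : lift f s hs (C r) = f r := by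
  simp [lift, C]

@[simp] lemma lift_t (f : R →+* S) (s : S) (hs : s ^ 3 = 0) : lift f s hs t = s := by
  simp [lift, t]

def conj : Trunc3 (ZMod 3) →+* Trunc3 (ZMod 3) := lift C (1 - (1 - t) ^ 26) (by decide)

lemma conj_one_sub_t : conj (1 - t) = (1 - t) ^ 26 := by
  simp [conj]

lemma mul_conj_eq_one_iff (x : Trunc3 (ZMod 3)) :
    x * conj x = 1 ↔ ∃ k : Fin 3, x = (1 - t) ^ (k : ℕ) ∨ x = -(1 - t) ^ (k : ℕ) := by
  revert x; decide

lemma card_mul_conj_eq_one : Fintype.card {x : Trunc3 (ZMod 3) // x * conj x = 1} = 6 := by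
  decide

lemma eval₂_cyclotomic_27_one_sub_t :
    (cyclotomic 27 ℤ).eval₂ (Int.castRingHom _) (1 - t : Trunc3 (ZMod 3)) = 0 := by
  simp only [cyclotomic_27_eq, eval₂_add, eval₂_one, eval₂_X_pow]
  decide

end Trunc3

local notation "ζ" => Ideal.Quotient.mk I18 z18

namespace Q18

lemma one_add_zeta_pow_nine_add_zeta_pow_eighteen : 1 + ζ ^ 9 + ζ ^ 18 = 0 := by
  have h : (1 + X ^ 9 + X ^ 18 : ℤ[X]).eval₂ (AdjoinRoot.of _) z18 = 0 := by
    rw [← cyclotomic_27_eq]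
    exact AdjoinRoot.eval₂_root _
  simp only [eval₂_add, eval₂_one, eval₂_X_pow] at h
  simpa using congrArg (Ideal.Quotient.mk I18) h

lemma one_sub_zeta_pow_three : (1 - ζ) ^ 3 = 0 := by
  rw [← map_one (Ideal.Quotient.mk I18), ← map_sub, ← map_pow, Ideal.Quotient.eq_zero_iff_mem]
  exact Ideal.mem_span_singleton_self _

lemma three_eq_zero : (3 : Q18) = 0 := by
  set s := 1 - ζ
  have hs := one_sub_zeta_pow_three
  have h : 3 * (1 - s * (9 - 63 * s)) = 0 := by
    have h := one_add_zeta_pow_nine_add_zeta_pow_eighteen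
    rw [show ζ = 1 - s by ring, one_sub_pow_of_pow_three_eq_zero hs,
      one_sub_pow_of_pow_three_eq_zero hs] at h
    norm_num [Nat.choose_two_right] at h
    linear_combination h
  have hunit : IsUnit (1 - s * (9 - 63 * s)) :=
    ((Commute.all _ _).isNilpotent_mul_right ⟨3, hs⟩).isUnit_one_sub
  exact hunit.mul_left_eq_zero.mp h

lemma ringHom_ext {S : Type*} [Semiring S] {f g : Q18 →+* S} (h : f ζ = g ζ) : f = g :=
  Ideal.Quotient.ringHom_ext (AdjoinRoot.ringHom_ext (RingHom.ext_int _ _) h)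

noncomputable def toTrunc3 : Q18 →+* Trunc3 (ZMod 3) :=
  Ideal.Quotient.lift I18 (AdjoinRoot.lift _ _ Trunc3.eval₂_cyclotomic_27_one_sub_t) fun x hx => by
    obtain ⟨y, rfl⟩ := Ideal.mem_span_singleton.mp hx
    simp [z18, Trunc3.t_pow_three]

lemma toTrunc3_zeta : toTrunc3 ζ = 1 - Trunc3.t :=
  AdjoinRoot.lift_root Trunc3.eval₂_cyclotomic_27_one_sub_t

instance : Nontrivial Q18 := toTrunc3.domain_nontrivial

instance : CharP Q18 3 :=
  (CharP.charP_iff_prime_eq_zero Nat.prime_three).mpr (by exact_mod_cast three_eq_zero)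

noncomputable def ofTrunc3 : Trunc3 (ZMod 3) →+* Q18 :=
  Trunc3.lift (ZMod.castHom (dvd_refl 3) Q18) (1 - ζ) one_sub_zeta_pow_three

noncomputable def equivTrunc3 : Q18 ≃+* Trunc3 (ZMod 3) :=
  RingEquiv.ofRingHom toTrunc3 ofTrunc3
    (Trunc3.ringHom_ext (RingHom.ext_zmod _ _) (by simp [ofTrunc3, toTrunc3_zeta]))
    (ringHom_ext (by simp [ofTrunc3, toTrunc3_zeta]))

lemma equivTrunc3_zeta : equivTrunc3 ζ = 1 - Trunc3.t :=
  toTrunc3_zeta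

lemma equivTrunc3_map (σ : Q18 →+* Q18) (hσ : σ ζ = ζ ^ 26) (q : Q18) :
    equivTrunc3 (σ q) = Trunc3.conj (equivTrunc3 q) := by
  have : (equivTrunc3 : Q18 →+* _).comp σ = Trunc3.conj.comp equivTrunc3 :=
    ringHom_ext (by simp [hσ, equivTrunc3_zeta, Trunc3.conj_one_sub_t])
  exact RingHom.congr_fun this q

end Q18

/-- In `ℤ[ζ₂₇]/(1-ζ₂₇)³`, with `σ` the involution induced by
`ζ ↦ ζ⁻¹ = ζ²⁶`, the set of units `u` with `u·u^σ = 1` has exactly `6` elements,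
and these are precisely the classes of `±ζ₂₇^k` for `k = 0, 1, 2`. -/
theorem stmt18 (σ : Q18 ≃+* Q18)
    (hσ : σ (Ideal.Quotient.mk I18 z18) = (Ideal.Quotient.mk I18 z18) ^ 26) :
    Nat.card {u : Q18ˣ // (u : Q18) * σ (u : Q18) = 1} = 6 ∧
    ∀ u : Q18ˣ, ((u : Q18) * σ (u : Q18) = 1 ↔
      ∃ k : Fin 3, (u : Q18) = (Ideal.Quotient.mk I18 z18) ^ (k : ℕ) ∨
        (u : Q18) = -(Ideal.Quotient.mk I18 z18) ^ (k : ℕ)) := by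
  have transfer (q : Q18) :
      q * σ q = 1 ↔ Q18.equivTrunc3 q * Trunc3.conj (Q18.equivTrunc3 q) = 1 := by
    rw [← Q18.equivTrunc3_map σ.toRingHom hσ, ← map_mul, RingEquiv.map_eq_one_iff]
    rfl
  refine ⟨?_, fun u => ?_⟩
  · rw [Nat.card_congr ((unitsSubtypeEquivOfMulEqOne σ).trans
      (Q18.equivTrunc3.toEquiv.subtypeEquiv (q := fun x => x * Trunc3.conj x = 1) transfer)),
      Nat.card_eq_fintype_card, Trunc3.card_mul_conj_eq_one]
  · simp only [transfer, Trunc3.mul_conj_eq_one_iff, ← Q18.equivTrunc3_zeta, ← map_pow, ← map_neg,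
      Q18.equivTrunc3.injective.eq_iff]
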